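/- Let H be a weak Hopf algebra and C a left partial H-module coalgebra via ·. Then the dual convolution algebra C* is a right partial H-module algebra via (α↼h)(c) := α(h·c) for α ∈ C*, h ∈ H, c ∈ C. Moreover, if C is a symmetric left partial H-module coalgebra, then C* is a symmetric right partial H-module algebra. -/

import Mathlib

open TensorProduct Coalgebra

noncomputable section

variable (k : Type*) [Field k]

section WeakHopfDefs

variable (H : Type*) [Ring H] [Algebra k H] [Coalgebra k H]

/-- The target map `ε_t(h) = ε(1₁ h) 1₂` of a weak bialgebra. -/
def wεt (h : H) : H :=
  (TensorProduct.lid k H)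
    ((TensorProduct.map (counit (R := k) ∘ₗ LinearMap.mulRight k h) (LinearMap.id))
      (comul (R := k) (1 : H)))

/-- The source map `ε_s(h) = 1₁ ε(h 1₂)` of a weak bialgebra. -/
def wεs (h : H) : H :=
  (TensorProduct.rid k H)
    ((TensorProduct.map (LinearMap.id) (counit (R := k) ∘ₗ LinearMap.mulLeft k h))
      (comul (R := k) (1 : H)))

/-- A weak Hopf algebra structure on an algebra `H` which is also a coalgebra:
the weak bialgebra axioms together with an antipode `S`. -/
structure WeakHopf : Type _ where
  /-- Δ is multiplicative -/
  comul_mul : ∀ h g : H, comul (R := k) (h * g) = comul (R := k) h * comul (R := k) g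
  /-- ε(hgl) = Σ ε(h g₁) ε(g₂ l) -/
  counit_weak_mul : ∀ h g l : H, counit (R := k) (h * g * l)
      = LinearMap.mul' k k
          ((TensorProduct.map (counit (R := k) ∘ₗ LinearMap.mulLeft k h)
              (counit (R := k) ∘ₗ LinearMap.mulRight k l)) (comul (R := k) g))
  /-- ε(hgl) = Σ ε(h g₂) ε(g₁ l) -/
  counit_weak_mul' : ∀ h g l : H, counit (R := k) (h * g * l)
      = LinearMap.mul' k k
          ((TensorProduct.map (counit (R := k) ∘ₗ LinearMap.mulLeft k h)
              (counit (R := k) ∘ₗ LinearMap.mulRight k l))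
            ((TensorProduct.comm k H H) (comul (R := k) g)))
  /-- (1 ⊗ Δ(1))(Δ(1) ⊗ 1) = Δ²(1) -/
  comul_one_left :
      ((1 : H) ⊗ₜ[k] comul (R := k) (1 : H))
          * ((TensorProduct.assoc k H H H) (comul (R := k) (1 : H) ⊗ₜ[k] (1 : H)))
        = (LinearMap.lTensor H (comul (R := k))) (comul (R := k) (1 : H))
  /-- (Δ(1) ⊗ 1)(1 ⊗ Δ(1)) = Δ²(1) -/
  comul_one_right :
      ((TensorProduct.assoc k H H H) (comul (R := k) (1 : H) ⊗ₜ[k] (1 : H)))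
          * ((1 : H) ⊗ₜ[k] comul (R := k) (1 : H))
        = (LinearMap.lTensor H (comul (R := k))) (comul (R := k) (1 : H))
  /-- the antipode -/
  S : H →ₗ[k] H
  /-- Σ h₁ S(h₂) = ε_t(h) -/
  antipode_t : ∀ h : H,
      LinearMap.mul' k H ((LinearMap.lTensor H S) (comul (R := k) h)) = wεt k H h
  /-- Σ S(h₁) h₂ = ε_s(h) -/
  antipode_s : ∀ h : H,
      LinearMap.mul' k H ((LinearMap.rTensor H S) (comul (R := k) h)) = wεs k H h
  /-- Σ S(h₁) h₂ S(h₃) = S(h) -/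
  antipode_mid : ∀ h : H,
      LinearMap.mul' k H
        ((TensorProduct.map S (LinearMap.mul' k H ∘ₗ LinearMap.lTensor H S))
          ((LinearMap.lTensor H (comul (R := k))) (comul (R := k) h))) = S h

end WeakHopfDefs

section Actions

variable (H : Type*) [Ring H] [Algebra k H] [Coalgebra k H]
variable (C : Type*) [AddCommGroup C] [Module k C] [Coalgebra k C]

/-- The Sweedler sum `Σ (h g₁ · c₁) ε(g₂ · c₂)` appearing in (PMC3). -/
def pmc3RHS (act : H →ₗ[k] C →ₗ[k] C) (h g : H) (c : C) : C :=
  (TensorProduct.rid k C)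
    ((TensorProduct.map
        ((TensorProduct.lift act) ∘ₗ (LinearMap.rTensor C (LinearMap.mulLeft k h)))
        (counit (R := k) ∘ₗ (TensorProduct.lift act)))
      ((TensorProduct.tensorTensorTensorComm k H H C C)
        (comul (R := k) g ⊗ₜ[k] comul (R := k) c)))

/-- The Sweedler sum `Σ ε(g₁ · c₁) (h g₂ · c₂)` appearing in the symmetry condition. -/
def pmc3symRHS (act : H →ₗ[k] C →ₗ[k] C) (h g : H) (c : C) : C :=
  (TensorProduct.lid k C)
    ((TensorProduct.map
        (counit (R := k) ∘ₗ (TensorProduct.lift act))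
        ((TensorProduct.lift act) ∘ₗ (LinearMap.rTensor C (LinearMap.mulLeft k h))))
      ((TensorProduct.tensorTensorTensorComm k H H C C)
        (comul (R := k) g ⊗ₜ[k] comul (R := k) c)))

/-- (MC2)/(PMC2): `Δ(h·c) = (h₁·c₁) ⊗ (h₂·c₂)`. -/
def SweedlerComulCompat (act : H →ₗ[k] C →ₗ[k] C) : Prop :=
  ∀ (h : H) (c : C),
    comul (R := k) (act h c)
      = (TensorProduct.map (TensorProduct.lift act) (TensorProduct.lift act))
          ((TensorProduct.tensorTensorTensorComm k H H C C)
            (comul (R := k) h ⊗ₜ[k] comul (R := k) c))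

/-- `C` is a left partial `H`-module coalgebra via `act` (`act h c = h · c`). -/
structure IsPartialModuleCoalgebra (act : H →ₗ[k] C →ₗ[k] C) : Prop where
  pmc1 : ∀ c : C, act 1 c = c
  pmc2 : SweedlerComulCompat k H C act
  pmc3 : ∀ (h g : H) (c : C), act h (act g c) = pmc3RHS k H C act h g c

/-- `C` is a symmetric left partial `H`-module coalgebra via `act`. -/
structure IsSymmetricPartialModuleCoalgebra (act : H →ₗ[k] C →ₗ[k] C)
    extends IsPartialModuleCoalgebra k H C act : Prop where
  pmc3sym : ∀ (h g : H) (c : C), act h (act g c) = pmc3symRHS k H C act h g c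

/-- `C` is a left `H`-module coalgebra via `act`. -/
structure IsModuleCoalgebra (act : H →ₗ[k] C →ₗ[k] C) : Prop where
  mc1 : ∀ c : C, act 1 c = c
  mc2 : SweedlerComulCompat k H C act
  mc3 : ∀ (h g : H) (c : C), act h (act g c) = act (h * g) c
  mc4 : ∀ (h : H) (c : C), counit (R := k) (act h c) = counit (R := k) (act (wεs k H h) c)

end Actions

end

noncomputable section DualDefs

variable (k : Type*) [Field k]
variable (H : Type*) [Ring H] [Algebra k H] [Coalgebra k H]
variable (C : Type*) [AddCommGroup C] [Module k C] [Coalgebra k C]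

/-- The convolution product on the dual `C* = Hom_k(C, k)`: `(αβ)(c) = α(c₁)β(c₂)`. -/
def convDual (α β : C →ₗ[k] k) : C →ₗ[k] k :=
  (LinearMap.mul' k k) ∘ₗ (TensorProduct.map α β) ∘ₗ (comul (R := k))

/-- `C*` is a right partial `H`-module algebra via `(α ↼ h)(c) = α(h · c)`, i.e.
`α ↼ h = α ∘ₗ act h`.  The three axioms are: `α ↼ 1 = α`;
`(αβ) ↼ h = (α ↼ h₁)(β ↼ h₂)`; and `(α ↼ h) ↼ g = (α ↼ h g₁)(1_{C*} ↼ g₂)`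
(written out on elements, with `1_{C*} = ε`). -/
structure IsDualRightPartialModuleAlgebra (act : H →ₗ[k] C →ₗ[k] C) : Prop where
  rpma1 : ∀ α : C →ₗ[k] k, α ∘ₗ act 1 = α
  rpma2 : ∀ (h : H) (α β : C →ₗ[k] k) (c : C),
      convDual k C α β (act h c)
        = LinearMap.mul' k k
            ((TensorProduct.map (α ∘ₗ TensorProduct.lift act) (β ∘ₗ TensorProduct.lift act))
              ((TensorProduct.tensorTensorTensorComm k H H C C)
                (comul (R := k) h ⊗ₜ[k] comul (R := k) c)))
  rpma3 : ∀ (h g : H) (α : C →ₗ[k] k) (c : C),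
      α (act h (act g c))
        = LinearMap.mul' k k
            ((TensorProduct.map
                (α ∘ₗ (TensorProduct.lift act) ∘ₗ (LinearMap.rTensor C (LinearMap.mulLeft k h)))
                (counit (R := k) ∘ₗ TensorProduct.lift act))
              ((TensorProduct.tensorTensorTensorComm k H H C C)
                (comul (R := k) g ⊗ₜ[k] comul (R := k) c)))

/-- `C*` is a *symmetric* right partial `H`-module algebra:
additionally `(α ↼ h) ↼ g = (1_{C*} ↼ g₁)(α ↼ h g₂)`. -/
structure IsDualSymmetricRightPartialModuleAlgebra (act : H →ₗ[k] C →ₗ[k] C)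
    extends IsDualRightPartialModuleAlgebra k H C act : Prop where
  rpma3sym : ∀ (h g : H) (α : C →ₗ[k] k) (c : C),
      α (act h (act g c))
        = LinearMap.mul' k k
            ((TensorProduct.map
                (counit (R := k) ∘ₗ TensorProduct.lift act)
                (α ∘ₗ (TensorProduct.lift act) ∘ₗ (LinearMap.rTensor C (LinearMap.mulLeft k h))))
              ((TensorProduct.tensorTensorTensorComm k H H C C)
                (comul (R := k) g ⊗ₜ[k] comul (R := k) c)))

end DualDefs

/-!
Every axiom for `C*` is the image under a functional `α` of the corresponding axiom for `C`:
`((αβ) ↼ h)(c) = (α ⊗ β)(Δ(h · c))`, which (PMC2) splits into `(α ↼ h₁)(β ↼ h₂)`, and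
applying `α` to (PMC3) or its symmetric form only moves `α` past the scalar factor
`ε(g₂ · c₂)` (resp. `ε(g₁ · c₁)`).
-/

section TensorScalar

variable {R M N P : Type*} [CommSemiring R] [AddCommMonoid M] [Module R M]
  [AddCommMonoid N] [Module R N] [AddCommMonoid P] [Module R P]

theorem TensorProduct.comp_rid_map (α : P →ₗ[R] R) (f : M →ₗ[R] P) (g : N →ₗ[R] R) :
    α ∘ₗ (TensorProduct.rid R P).toLinearMap ∘ₗ TensorProduct.map f g
      = LinearMap.mul' R R ∘ₗ TensorProduct.map (α ∘ₗ f) g := by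
  ext m n
  simp [mul_comm]

theorem TensorProduct.comp_lid_map (α : P →ₗ[R] R) (g : M →ₗ[R] R) (f : N →ₗ[R] P) :
    α ∘ₗ (TensorProduct.lid R P).toLinearMap ∘ₗ TensorProduct.map g f
      = LinearMap.mul' R R ∘ₗ TensorProduct.map g (α ∘ₗ f) := by
  ext m n
  simp

end TensorScalar

section Dual

variable {k H C : Type*} [Field k] [Ring H] [Algebra k H] [Coalgebra k H]
  [AddCommGroup C] [Module k C] [Coalgebra k C] {act : H →ₗ[k] C →ₗ[k] C}

theorem convDual_apply_act_of_sweedlerComulCompat (hact : SweedlerComulCompat k H C act)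
    (h : H) (α β : C →ₗ[k] k) (c : C) :
    convDual k C α β (act h c)
      = LinearMap.mul' k k
          ((TensorProduct.map (α ∘ₗ TensorProduct.lift act) (β ∘ₗ TensorProduct.lift act))
            ((TensorProduct.tensorTensorTensorComm k H H C C)
              (comul (R := k) h ⊗ₜ[k] comul (R := k) c))) := by
  rw [convDual, LinearMap.comp_apply, LinearMap.comp_apply, hact h c,
    ← LinearMap.comp_apply (TensorProduct.map α β), ← TensorProduct.map_comp]

theorem IsPartialModuleCoalgebra.isDualRightPartialModuleAlgebra
    (hact : IsPartialModuleCoalgebra k H C act) :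
    IsDualRightPartialModuleAlgebra k H C act where
  rpma1 α := by
    ext c
    rw [LinearMap.comp_apply, hact.pmc1]
  rpma2 := convDual_apply_act_of_sweedlerComulCompat hact.pmc2
  rpma3 h g α c := by
    rw [hact.pmc3, pmc3RHS]
    exact LinearMap.congr_fun (TensorProduct.comp_rid_map _ _ _) _

theorem IsSymmetricPartialModuleCoalgebra.isDualSymmetricRightPartialModuleAlgebra
    (hact : IsSymmetricPartialModuleCoalgebra k H C act) :
    IsDualSymmetricRightPartialModuleAlgebra k H C act where
  toIsDualRightPartialModuleAlgebra :=
    hact.toIsPartialModuleCoalgebra.isDualRightPartialModuleAlgebra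
  rpma3sym h g α c := by
    rw [hact.pmc3sym, pmc3symRHS]
    exact LinearMap.congr_fun (TensorProduct.comp_lid_map _ _ _) _

end Dual

theorem dual_of_partial_module_coalgebra_general
    (k : Type*) [Field k] (H : Type*) [Ring H] [Algebra k H] [Coalgebra k H]
    (C : Type*) [AddCommGroup C] [Module k C] [Coalgebra k C]
    (act : H →ₗ[k] C →ₗ[k] C) :
    (IsPartialModuleCoalgebra k H C act → IsDualRightPartialModuleAlgebra k H C act) ∧
    (IsSymmetricPartialModuleCoalgebra k H C act →
      IsDualSymmetricRightPartialModuleAlgebra k H C act) :=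
  ⟨IsPartialModuleCoalgebra.isDualRightPartialModuleAlgebra,
    IsSymmetricPartialModuleCoalgebra.isDualSymmetricRightPartialModuleAlgebra⟩

/-- If `C` is a left partial `H`-module coalgebra via `·`, then the dual
convolution algebra `C*` is a right partial `H`-module algebra via `(α ↼ h)(c) = α(h · c)`;
and if `C` is symmetric, then so is `C*`. -/
theorem dual_of_partial_module_coalgebra
    (k : Type*) [Field k] (H : Type*) [Ring H] [Algebra k H] [Coalgebra k H]
    (C : Type*) [AddCommGroup C] [Module k C] [Coalgebra k C]
    (wh : WeakHopf k H) (act : H →ₗ[k] C →ₗ[k] C) :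
    (IsPartialModuleCoalgebra k H C act → IsDualRightPartialModuleAlgebra k H C act) ∧
    (IsSymmetricPartialModuleCoalgebra k H C act →
      IsDualSymmetricRightPartialModuleAlgebra k H C act) :=
  dual_of_partial_module_coalgebra_general k H C act
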